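/- If π is an optimal dual solution (Lagrange multiplier of the equality constraint) of the linear program Q(x̄) = min { c^T y : A y = b - B x̄, y ≥ 0 }, then -B^T π is a subgradient of the value function Q at x̄, i.e., Q(x) ≥ Q(x̄) + ⟨-B^T π, x - x̄⟩ for all x. -/
import Mathlib


open Matrix

/-- If `π` is an optimal dual solution of the LP
`Q(xb) = min { cᵀ y : A y = b - B xb, y ≥ 0 }`, then `-Bᵀ π` is a subgradient of
the value function `Q` at `xb`: `Q x ≥ Q xb + ⟨-Bᵀ π, x - xb⟩` for all `x`. -/
theorem dual_solution_gives_subgradient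
    {m n k : ℕ} (A : Matrix (Fin k) (Fin n) ℝ) (B : Matrix (Fin k) (Fin m) ℝ)
    (b : Fin k → ℝ) (c : Fin n → ℝ) (Q : (Fin m → ℝ) → ℝ)
    (hQ : ∀ x : Fin m → ℝ,
      IsGLB {r : ℝ | ∃ y : Fin n → ℝ, (∀ i, 0 ≤ y i) ∧
        A.mulVec y = b - B.mulVec x ∧ r = c ⬝ᵥ y} (Q x))
    (π : Fin k → ℝ)
    (hfeas : ∀ j, (Aᵀ.mulVec π) j ≤ c j)
    (xb : Fin m → ℝ)
    (hopt : Q xb = (b - B.mulVec xb) ⬝ᵥ π) :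
    ∀ x : Fin m → ℝ, Q x ≥ Q xb + (-(Bᵀ.mulVec π)) ⬝ᵥ (x - xb) := by
  intro x
  have key : (b - B.mulVec x) ⬝ᵥ π ≤ Q x := by
    apply (hQ x).2
    rintro r ⟨y, hy, hAy, rfl⟩
    calc (b - B.mulVec x) ⬝ᵥ π = A.mulVec y ⬝ᵥ π := by rw [hAy]
      _ = π ⬝ᵥ A.mulVec y := dotProduct_comm _ _
      _ = Aᵀ.mulVec π ⬝ᵥ y := by rw [mulVec_transpose, dotProduct_mulVec]
      _ ≤ c ⬝ᵥ y := Finset.sum_le_sum fun i _ =>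
          mul_le_mul_of_nonneg_right (hfeas i) (hy i)
  have heq : Q xb + (-(Bᵀ.mulVec π)) ⬝ᵥ (x - xb) = (b - B.mulVec x) ⬝ᵥ π := by
    rw [hopt]
    simp only [mulVec_transpose, neg_dotProduct, ← dotProduct_mulVec,
      mulVec_sub, dotProduct_sub, sub_dotProduct, dotProduct_comm π]
    ring
  linarith [key, heq.ge]
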